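/- (Forward error bound in terms of the condition number of V.) Let A be an invertible n×n real matrix, let U, V be n×k real matrices with V of full column rank, set λ = ‖U‖·‖V‖, κ(V) = ‖V‖·‖(VᵀV)⁻¹Vᵀ‖, and B = A + UVᵀ, and assume B is invertible. Assume the capacitance matrix I + Vᵀ A⁻¹ U is invertible with ‖(I + Vᵀ A⁻¹ U)⁻¹‖ ≤ α. Let X be an n×n matrix with ‖X − A⁻¹‖ ≤ ε₁ where ε₁ < 1/(2λα); assume I + Vᵀ X U is invertible; and let Z be a k×k matrix with ‖Z − (I + Vᵀ X U)⁻¹‖ ≤ ε₂. Then ‖B⁻¹ − (X − X U Z Vᵀ X)‖ ≤ ε₁ + ε₁ λ κ(V) ‖B⁻¹A‖ (2‖A⁻¹‖ + ε₁) + λ(‖A⁻¹‖ + ε₁)² (ε₂ + 2 ε₁ λ (κ(V)‖B⁻¹A‖)²). -/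

import Mathlib

open Matrix
open scoped Matrix.Norms.L2Operator Ring

/-!
By the Sherman–Morrison–Woodbury formula, `B⁻¹ = A⁻¹ - A⁻¹ U C⁻¹ Vᵀ A⁻¹` with capacitance
matrix `C = I + Vᵀ A⁻¹ U`, and the same formula also gives the push-through identity
`C⁻¹ Vᵀ = Vᵀ B⁻¹ A`. Since `Vᵀ` has the right inverse `((VᵀV)⁻¹Vᵀ)ᵀ`, this yields
`‖C⁻¹‖ ≤ κ(V) ‖B⁻¹ A‖`, a bound that replaces `α` everywhere except in the smallness condition.

The perturbed capacitance matrix `C̃ = I + Vᵀ X U` differs from `C` by `Vᵀ (X - A⁻¹) U`, of norm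
at most `λ ε₁`; as `λ ε₁ ‖C⁻¹‖ ≤ λ ε₁ α < 1/2`, the resolvent identity
`C̃⁻¹ - C⁻¹ = C̃⁻¹ (C - C̃) C⁻¹` gives `‖C̃⁻¹‖ ≤ 2 ‖C⁻¹‖` and `‖C̃⁻¹ - C⁻¹‖ ≤ 2 λ ε₁ ‖C⁻¹‖²`.
Finally the difference of the exact and the approximate Woodbury expressions splits into four
products, each bounded by submultiplicativity of the operator norm.
-/

theorem norm_inverse_le_two_mul {R : Type*} [NormedRing R] {a b : R}
    (h : IsUnit a ↔ IsUnit b) (hab : ‖b - a‖ * ‖a⁻¹ʳ‖ ≤ 1 / 2) :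
    ‖b⁻¹ʳ‖ ≤ 2 * ‖a⁻¹ʳ‖ := by
  have hid : b⁻¹ʳ = a⁻¹ʳ + b⁻¹ʳ * (a - b) * a⁻¹ʳ := by
    rw [← Ring.inverse_sub_inverse h.symm]; abel
  have : ‖b⁻¹ʳ‖ ≤ ‖a⁻¹ʳ‖ + ‖b⁻¹ʳ‖ * (‖b - a‖ * ‖a⁻¹ʳ‖) :=
    calc ‖b⁻¹ʳ‖ ≤ ‖a⁻¹ʳ‖ + ‖b⁻¹ʳ * (a - b) * a⁻¹ʳ‖ := by
          nth_rw 1 [hid]; exact norm_add_le _ _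
      _ ≤ ‖a⁻¹ʳ‖ + ‖b⁻¹ʳ‖ * (‖b - a‖ * ‖a⁻¹ʳ‖) := by
          grw [norm_mul_le, norm_mul_le, norm_sub_rev, mul_assoc]
  nlinarith [norm_nonneg b⁻¹ʳ]

theorem norm_inverse_sub_inverse_le {R : Type*} [NormedRing R] {a b : R}
    (h : IsUnit a ↔ IsUnit b) (hab : ‖b - a‖ * ‖a⁻¹ʳ‖ ≤ 1 / 2) :
    ‖b⁻¹ʳ - a⁻¹ʳ‖ ≤ 2 * ‖b - a‖ * ‖a⁻¹ʳ‖ ^ 2 :=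
  calc ‖b⁻¹ʳ - a⁻¹ʳ‖ = ‖b⁻¹ʳ * (a - b) * a⁻¹ʳ‖ := by rw [Ring.inverse_sub_inverse h.symm]
    _ ≤ ‖b⁻¹ʳ‖ * ‖b - a‖ * ‖a⁻¹ʳ‖ := by grw [norm_mul_le, norm_mul_le, norm_sub_rev]
    _ ≤ 2 * ‖a⁻¹ʳ‖ * ‖b - a‖ * ‖a⁻¹ʳ‖ := by grw [norm_inverse_le_two_mul h hab]
    _ = 2 * ‖b - a‖ * ‖a⁻¹ʳ‖ ^ 2 := by ring

namespace Matrix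

variable {n k R : Type*}

section Algebra

variable [CommRing R]

def capacitance [Fintype n] [DecidableEq k] (X : Matrix n n R) (U : Matrix n k R)
    (W : Matrix k n R) : Matrix k k R :=
  1 + W * X * U

def woodbury [Fintype n] [Fintype k] (X : Matrix n n R) (U : Matrix n k R) (G : Matrix k k R)
    (W : Matrix k n R) : Matrix n n R :=
  X - X * U * G * W * X

theorem capacitance_sub_capacitance [Fintype n] [DecidableEq k] (X Y : Matrix n n R)
    (U : Matrix n k R) (W : Matrix k n R) :
    capacitance X U W - capacitance Y U W = W * (X - Y) * U := by
  simp only [capacitance, Matrix.mul_sub, Matrix.sub_mul]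
  abel

theorem woodbury_sub_woodbury [Fintype n] [Fintype k] (X Y : Matrix n n R) (U : Matrix n k R)
    (G Z : Matrix k k R) (W : Matrix k n R) :
    woodbury Y U G W - woodbury X U Z W =
      (Y - X) + X * U * (Z - G) * W * X + (X - Y) * U * G * W * X + Y * U * G * W * (X - Y) := by
  simp only [woodbury, Matrix.mul_sub, Matrix.sub_mul]
  abel

variable [Fintype n] [Fintype k] [DecidableEq k]

theorem inv_add_mul_eq_woodbury [DecidableEq n] {A : Matrix n n R} {U : Matrix n k R}
    {W : Matrix k n R} (hA : IsUnit A) (hC : IsUnit (capacitance A⁻¹ U W)) :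
    (A + U * W)⁻¹ = woodbury A⁻¹ U (capacitance A⁻¹ U W)⁻¹ W := by
  have h := add_mul_mul_inv_eq_sub A U 1 W hA isUnit_one (by rwa [inv_one])
  rwa [Matrix.mul_one, inv_one] at h

theorem inv_capacitance_mul_eq [DecidableEq n] {A : Matrix n n R} {U : Matrix n k R}
    {W : Matrix k n R} (hA : IsUnit A) (hC : IsUnit (capacitance A⁻¹ U W)) :
    (capacitance A⁻¹ U W)⁻¹ * W = W * (A + U * W)⁻¹ * A := by
  set C := capacitance A⁻¹ U W with hCdef
  have hAA : A⁻¹ * A = 1 := nonsing_inv_mul A ((isUnit_iff_isUnit_det A).mp hA)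
  have hCC : C * C⁻¹ = 1 := mul_nonsing_inv C ((isUnit_iff_isUnit_det C).mp hC)
  -- the middle factor `W * A⁻¹ * U` of `W * (A + U * W)⁻¹ * A` is `C - 1`
  calc C⁻¹ * W = W - (C - 1) * C⁻¹ * W := by
        rw [Matrix.sub_mul, hCC, Matrix.one_mul, Matrix.sub_mul, Matrix.one_mul]; abel
    _ = W * (A + U * W)⁻¹ * A := by
        rw [inv_add_mul_eq_woodbury hA hC, hCdef, capacitance]
        simp only [woodbury, Matrix.mul_sub, Matrix.sub_mul, Matrix.mul_assoc, hAA,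
          Matrix.mul_one, add_sub_cancel_left]

theorem transpose_mul_transpose_pinv_eq_one {V : Matrix n k R} (hV : IsUnit (Vᵀ * V)) :
    Vᵀ * ((Vᵀ * V)⁻¹ * Vᵀ)ᵀ = 1 := by
  rw [transpose_mul, transpose_transpose, transpose_nonsing_inv, transpose_mul,
    transpose_transpose, ← Matrix.mul_assoc, mul_nonsing_inv _ ((isUnit_iff_isUnit_det _).mp hV)]

end Algebra

section Norm

variable {m 𝕜 : Type*} [RCLike 𝕜] [Fintype n] [DecidableEq n] [Fintype k] [DecidableEq k]

theorem l2_opNorm_transpose [Fintype m] [DecidableEq m] (M : Matrix m n ℝ) : ‖Mᵀ‖ = ‖M‖ := by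
  rw [← l2_opNorm_conjTranspose M]
  rfl

theorem l2_opNorm_le_mul_of_mul_eq_one [Fintype m] {P : Matrix m k 𝕜} {W : Matrix k n 𝕜}
    {R : Matrix n k 𝕜} (h : W * R = 1) : ‖P‖ ≤ ‖P * W‖ * ‖R‖ :=
  calc ‖P‖ = ‖P * W * R‖ := by rw [Matrix.mul_assoc, h, Matrix.mul_one]
    _ ≤ ‖P * W‖ * ‖R‖ := l2_opNorm_mul _ _

theorem l2_opNorm_woodbury_sub_woodbury_le (X Y : Matrix n n 𝕜) (U : Matrix n k 𝕜)
    (G Z : Matrix k k 𝕜) (W : Matrix k n 𝕜) :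
    ‖woodbury Y U G W - woodbury X U Z W‖ ≤
      ‖X - Y‖ + ‖X - Y‖ * (‖U‖ * ‖W‖) * ‖G‖ * (‖X‖ + ‖Y‖) + ‖U‖ * ‖W‖ * ‖X‖ ^ 2 * ‖Z - G‖ := by
  have hZ : ‖X * U * (Z - G) * W * X‖ ≤ ‖X‖ * ‖U‖ * ‖Z - G‖ * ‖W‖ * ‖X‖ := by
    grw [l2_opNorm_mul, l2_opNorm_mul, l2_opNorm_mul, l2_opNorm_mul]
  have hX : ‖(X - Y) * U * G * W * X‖ ≤ ‖X - Y‖ * ‖U‖ * ‖G‖ * ‖W‖ * ‖X‖ := by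
    grw [l2_opNorm_mul, l2_opNorm_mul, l2_opNorm_mul, l2_opNorm_mul]
  have hY : ‖Y * U * G * W * (X - Y)‖ ≤ ‖Y‖ * ‖U‖ * ‖G‖ * ‖W‖ * ‖X - Y‖ := by
    grw [l2_opNorm_mul, l2_opNorm_mul, l2_opNorm_mul, l2_opNorm_mul]
  rw [woodbury_sub_woodbury]
  grw [norm_add₄_le, hZ, hX, hY, norm_sub_rev Y X]
  exact le_of_eq (by ring)

theorem l2_opNorm_inv_capacitance_sub_le {X Y : Matrix n n 𝕜} {U : Matrix n k 𝕜}
    {W : Matrix k n 𝕜} (hX : IsUnit (capacitance X U W)) (hY : IsUnit (capacitance Y U W))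
    {δ : ℝ} (hδ : ‖W‖ * ‖X - Y‖ * ‖U‖ ≤ δ) (hsmall : δ * ‖(capacitance Y U W)⁻¹‖ ≤ 1 / 2) :
    ‖(capacitance X U W)⁻¹ - (capacitance Y U W)⁻¹‖ ≤ 2 * δ * ‖(capacitance Y U W)⁻¹‖ ^ 2 := by
  have hd : ‖capacitance X U W - capacitance Y U W‖ ≤ δ := by
    grw [capacitance_sub_capacitance, l2_opNorm_mul, l2_opNorm_mul, hδ]
  have key : ‖capacitance X U W - capacitance Y U W‖ * ‖(capacitance Y U W)⁻¹‖ ≤ 1 / 2 →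
      ‖(capacitance X U W)⁻¹ - (capacitance Y U W)⁻¹‖ ≤
        2 * ‖capacitance X U W - capacitance Y U W‖ * ‖(capacitance Y U W)⁻¹‖ ^ 2 := by
    simpa only [nonsing_inv_eq_ringInverse] using
      norm_inverse_sub_inverse_le (iff_of_true hY hX)
  grw [key (by grw [hd]; exact hsmall), hd]

theorem l2_opNorm_inv_capacitance_le {A : Matrix n n ℝ} {U V : Matrix n k ℝ} (hA : IsUnit A)
    (hC : IsUnit (capacitance A⁻¹ U Vᵀ)) (hV : IsUnit (Vᵀ * V)) :
    ‖(capacitance A⁻¹ U Vᵀ)⁻¹‖ ≤ ‖V‖ * ‖(Vᵀ * V)⁻¹ * Vᵀ‖ * ‖(A + U * Vᵀ)⁻¹ * A‖ :=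
  calc ‖(capacitance A⁻¹ U Vᵀ)⁻¹‖
      ≤ ‖(capacitance A⁻¹ U Vᵀ)⁻¹ * Vᵀ‖ * ‖((Vᵀ * V)⁻¹ * Vᵀ)ᵀ‖ :=
        l2_opNorm_le_mul_of_mul_eq_one (transpose_mul_transpose_pinv_eq_one hV)
    _ = ‖Vᵀ * ((A + U * Vᵀ)⁻¹ * A)‖ * ‖(Vᵀ * V)⁻¹ * Vᵀ‖ := by
        rw [inv_capacitance_mul_eq hA hC, Matrix.mul_assoc, l2_opNorm_transpose]
    _ ≤ ‖V‖ * ‖(A + U * Vᵀ)⁻¹ * A‖ * ‖(Vᵀ * V)⁻¹ * Vᵀ‖ := by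
        grw [l2_opNorm_mul, l2_opNorm_transpose]
    _ = ‖V‖ * ‖(Vᵀ * V)⁻¹ * Vᵀ‖ * ‖(A + U * Vᵀ)⁻¹ * A‖ := by ring

end Norm

end Matrix

theorem smw_forward_error_cond_number_general {n k : ℕ}
    (A : Matrix (Fin n) (Fin n) ℝ) (hA : IsUnit A)
    (U V : Matrix (Fin n) (Fin k) ℝ) (hV : IsUnit (Vᵀ * V))
    (lam : ℝ) (hlam : lam = ‖U‖ * ‖V‖)
    (κV : ℝ) (hκV : κV = ‖V‖ * ‖(Vᵀ * V)⁻¹ * Vᵀ‖)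
    (B : Matrix (Fin n) (Fin n) ℝ) (hB : B = A + U * Vᵀ)
    (α : ℝ) (hcap : IsUnit ((1 : Matrix (Fin k) (Fin k) ℝ) + Vᵀ * A⁻¹ * U))
    (hα : ‖((1 : Matrix (Fin k) (Fin k) ℝ) + Vᵀ * A⁻¹ * U)⁻¹‖ ≤ α)
    (X : Matrix (Fin n) (Fin n) ℝ) (ε₁ ε₂ : ℝ)
    (hX : ‖X - A⁻¹‖ ≤ ε₁) (hε₁ : ε₁ < 1 / (2 * lam * α))
    (hcapX : IsUnit ((1 : Matrix (Fin k) (Fin k) ℝ) + Vᵀ * X * U))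
    (Z : Matrix (Fin k) (Fin k) ℝ)
    (hZ : ‖Z - ((1 : Matrix (Fin k) (Fin k) ℝ) + Vᵀ * X * U)⁻¹‖ ≤ ε₂) :
    ‖B⁻¹ - (X - X * U * Z * Vᵀ * X)‖ ≤
      ε₁ + ε₁ * lam * κV * ‖B⁻¹ * A‖ * (2 * ‖A⁻¹‖ + ε₁) +
        lam * (‖A⁻¹‖ + ε₁) ^ 2 * (ε₂ + 2 * ε₁ * lam * (κV * ‖B⁻¹ * A‖) ^ 2) := by
  change IsUnit (capacitance A⁻¹ U Vᵀ) at hcap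
  change IsUnit (capacitance X U Vᵀ) at hcapX
  change ‖(capacitance A⁻¹ U Vᵀ)⁻¹‖ ≤ α at hα
  change ‖Z - (capacitance X U Vᵀ)⁻¹‖ ≤ ε₂ at hZ
  set C := capacitance A⁻¹ U Vᵀ
  set μ := κV * ‖B⁻¹ * A‖
  have hε₁0 : 0 ≤ ε₁ := (norm_nonneg _).trans hX
  have hlam0 : 0 ≤ lam := by rw [hlam]; positivity
  have hα0 : 0 ≤ α := (norm_nonneg _).trans hα
  have hμ : ‖C⁻¹‖ ≤ μ := by
    simpa only [μ, hκV, hB] using l2_opNorm_inv_capacitance_le hA hcap hV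
  have hμ0 : 0 ≤ μ := (norm_nonneg _).trans hμ
  have hδ : ‖Vᵀ‖ * ‖X - A⁻¹‖ * ‖U‖ ≤ lam * ε₁ := by
    grw [l2_opNorm_transpose, hlam, hX]; linarith
  have hsmall : lam * ε₁ * α ≤ 1 / 2 := by
    rcases (by positivity : (0 : ℝ) ≤ 2 * lam * α).eq_or_lt with h | h
    -- `1 / 0 = 0`, so `hε₁` then reads `ε₁ < 0`
    · rw [← h, div_zero] at hε₁; linarith
    · have := (lt_div_iff₀ h).mp hε₁; linarith
  have hZC : ‖Z - C⁻¹‖ ≤ ε₂ + 2 * ε₁ * lam * μ ^ 2 := by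
    grw [← sub_add_sub_cancel, norm_add_le, hZ,
      l2_opNorm_inv_capacitance_sub_le hcapX hcap hδ (by grw [hα]; exact hsmall), hμ]
    linarith
  have hXn : ‖X‖ ≤ ‖A⁻¹‖ + ε₁ := by
    grw [← hX, ← norm_add_le, add_sub_cancel]
  calc ‖B⁻¹ - woodbury X U Z Vᵀ‖
      = ‖woodbury A⁻¹ U C⁻¹ Vᵀ - woodbury X U Z Vᵀ‖ := by rw [hB, inv_add_mul_eq_woodbury hA hcap]
    _ ≤ ‖X - A⁻¹‖ + ‖X - A⁻¹‖ * lam * ‖C⁻¹‖ * (‖X‖ + ‖A⁻¹‖) + lam * ‖X‖ ^ 2 * ‖Z - C⁻¹‖ := by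
        grw [l2_opNorm_woodbury_sub_woodbury_le, l2_opNorm_transpose, hlam]
    _ ≤ ε₁ + ε₁ * lam * μ * (‖A⁻¹‖ + ε₁ + ‖A⁻¹‖) +
          lam * (‖A⁻¹‖ + ε₁) ^ 2 * (ε₂ + 2 * ε₁ * lam * μ ^ 2) := by
        gcongr
    _ = _ := by ring

/-- Forward error bound in terms of the condition number κ(V) = ‖V‖·‖(VᵀV)⁻¹Vᵀ‖. -/
theorem smw_forward_error_cond_number {n k : ℕ}
    (A : Matrix (Fin n) (Fin n) ℝ) (hA : IsUnit A)
    (U V : Matrix (Fin n) (Fin k) ℝ) (hV : IsUnit (Vᵀ * V))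
    (lam : ℝ) (hlam : lam = ‖U‖ * ‖V‖)
    (κV : ℝ) (hκV : κV = ‖V‖ * ‖(Vᵀ * V)⁻¹ * Vᵀ‖)
    (B : Matrix (Fin n) (Fin n) ℝ) (hB : B = A + U * Vᵀ) (hBinv : IsUnit B)
    (α : ℝ) (hcap : IsUnit ((1 : Matrix (Fin k) (Fin k) ℝ) + Vᵀ * A⁻¹ * U))
    (hα : ‖((1 : Matrix (Fin k) (Fin k) ℝ) + Vᵀ * A⁻¹ * U)⁻¹‖ ≤ α)
    (X : Matrix (Fin n) (Fin n) ℝ) (ε₁ ε₂ : ℝ)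
    (hX : ‖X - A⁻¹‖ ≤ ε₁) (hε₁ : ε₁ < 1 / (2 * lam * α))
    (hcapX : IsUnit ((1 : Matrix (Fin k) (Fin k) ℝ) + Vᵀ * X * U))
    (Z : Matrix (Fin k) (Fin k) ℝ)
    (hZ : ‖Z - ((1 : Matrix (Fin k) (Fin k) ℝ) + Vᵀ * X * U)⁻¹‖ ≤ ε₂) :
    ‖B⁻¹ - (X - X * U * Z * Vᵀ * X)‖ ≤
      ε₁ + ε₁ * lam * κV * ‖B⁻¹ * A‖ * (2 * ‖A⁻¹‖ + ε₁) +
        lam * (‖A⁻¹‖ + ε₁) ^ 2 * (ε₂ + 2 * ε₁ * lam * (κV * ‖B⁻¹ * A‖) ^ 2) :=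
  smw_forward_error_cond_number_general A hA U V hV lam hlam κV hκV B hB α hcap hα X ε₁ ε₂ hX hε₁
    hcapX Z hZ
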